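/- Let G be an (n,d,λ)-graph with 3 ≤ d ≤ n−1 and λ ≤ d·(n−4)/(3n−4). Then for every subgraph H ⊆ G with Δ(H) ≤ (d−λ)/2 · (1 − 4/n), the graph G − H is (d − Δ(H))-edge-connected. -/

import Mathlib

open SimpleGraph Real
open scoped Classical

variable {V : Type*}

noncomputable def degN (H : SimpleGraph V) (v : V) : ℕ := (H.neighborSet v).ncard

noncomputable def maxDeg (H : SimpleGraph V) : ℕ := sSup (Set.range (degN H))

noncomputable def minDeg (H : SimpleGraph V) : ℕ := sInf (Set.range (degN H))

noncomputable def localResilience [Fintype V] (G : SimpleGraph V)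
    (P : SimpleGraph V → Prop) : ℕ :=
  sInf {r | ∃ H ≤ G, maxDeg H = r ∧ ¬ P (G \ H)}

def EdgeConnK [Fintype V] (G : SimpleGraph V) (k : ℕ) : Prop :=
  ∀ s : Finset (Sym2 V), s.card < k → (G.deleteEdges ↑s).Connected

def VertConnK [Fintype V] (G : SimpleGraph V) (k : ℕ) : Prop :=
  ∀ S : Finset V, S.card < k → (G.induce ((↑S : Set V)ᶜ)).Connected

def IsReg (G : SimpleGraph V) (d : ℕ) : Prop := ∀ v, degN G v = d

noncomputable def quadForm [Fintype V] (G : SimpleGraph V) (x : V → ℝ) : ℝ :=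
  ∑ u, ∑ v, if G.Adj u v then x u * x v else 0

/-- `(n,d,lam)`-graph: `d`-regular and all eigenvalues of the adjacency matrix other
than the top one (i.e. on the orthogonal complement of the all-ones vector) are at
most `lam` in absolute value. -/
def IsNDL [Fintype V] (G : SimpleGraph V) (d : ℕ) (lam : ℝ) : Prop :=
  IsReg G d ∧ ∀ x : V → ℝ, (∑ v, x v) = 0 → |quadForm G x| ≤ lam * ∑ v, (x v) ^ 2

noncomputable def edgesWithin (G : SimpleGraph V) (U : Set V) : ℕ :=
  {e ∈ G.edgeSet | ∀ v ∈ e, v ∈ U}.ncard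

noncomputable def edgesBetween (G : SimpleGraph V) (U W : Set V) : ℕ :=
  {p : V × V | p.1 ∈ U ∧ p.2 ∈ W ∧ G.Adj p.1 p.2}.ncard

def nbhd (G : SimpleGraph V) (S : Set V) : Set V :=
  {v | v ∉ S ∧ ∃ u ∈ S, G.Adj u v}

noncomputable def maxPathLength (G : SimpleGraph V) : ℕ :=
  sSup {n | ∃ (u v : V) (p : G.Walk u v), p.IsPath ∧ p.length = n}

def Booster [Fintype V] (G : SimpleGraph V) (u v : V) : Prop :=
  u ≠ v ∧ ¬ G.Adj u v ∧
    ((G ⊔ fromEdgeSet {s(u, v)}).IsHamiltonian ∨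
      maxPathLength G < maxPathLength (G ⊔ fromEdgeSet {s(u, v)}))

def BSet [Fintype V] (G : SimpleGraph V) (v : V) : Set V := {w | Booster G v w}

def boosterSet [Fintype V] (G : SimpleGraph V) : Set (Sym2 V) :=
  {e | ∃ u v, e = s(u, v) ∧ Booster G u v}

def IsExpander [Fintype V] (G : SimpleGraph V) (ε : ℝ) : Prop :=
  (∀ S : Set V, (S.ncard : ℝ) < ε * (Fintype.card V) →
      10 * S.ncard ≤ (nbhd G S).ncard) ∧
  (∀ S : Set V, ε * (Fintype.card V) ≤ (S.ncard : ℝ) →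
      (S.ncard : ℝ) ≤ 2 * ε * (Fintype.card V) →
      (1 + 12 * ε) * (Fintype.card V) / 2 ≤ ((nbhd G S).ncard : ℝ))

def IsMagnifier (G : SimpleGraph V) (k ℓ : ℝ) : Prop :=
  ∀ U : Set V, (U.ncard : ℝ) ≤ k → ℓ * U.ncard ≤ ((nbhd G U).ncard : ℝ)

def QuasiRandom [Fintype V] (G : SimpleGraph V) (d : ℕ) (ε : ℝ) : Prop :=
  ((d : ℝ) / 2 ≤ (minDeg G : ℝ) ∧ (maxDeg G : ℝ) ≤ 2 * d) ∧
  (∀ U : Set V, (U.ncard : ℝ) < ε ^ 3 * (Fintype.card V) / 14 →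
      (edgesWithin G U : ℝ) ≤ ε ^ 3 * d * U.ncard / 14) ∧
  (∀ U W : Set V, Disjoint U W →
      ε ^ 3 / 160 * (Fintype.card V) ≤ (U.ncard : ℝ) →
      (U.ncard : ℝ) < 2 * (ε ^ 3 / 160) * (Fintype.card V) →
      (Fintype.card V : ℝ) / 2 * (1 - ε / 2 - 4 * (ε ^ 3 / 160)) ≤ (W.ncard : ℝ) →
      (d : ℝ) * (1 - ε / 4) / (Fintype.card V) * (U.ncard * W.ncard)
          - (1 - ε) * (d : ℝ) / 2 * U.ncard ≤ (edgesBetween G U W : ℝ))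

def bipartiteBetween (G : SimpleGraph V) (S : Set V) : SimpleGraph V where
  Adj u v := G.Adj u v ∧ ((u ∈ S ∧ v ∉ S) ∨ (u ∉ S ∧ v ∈ S))
  symm := by
    constructor
    intro u v h
    exact ⟨h.1.symm, h.2.elim (fun hh => Or.inr ⟨hh.2, hh.1⟩) (fun hh => Or.inl ⟨hh.2, hh.1⟩)⟩
  loopless := by
    constructor
    intro v h
    exact G.irrefl h.1

def LegalStrategy [Fintype V] (G : SimpleGraph V)
    (σ : Finset (Sym2 V) × Finset (Sym2 V) → Sym2 V) : Prop :=
  ∀ s : Finset (Sym2 V) × Finset (Sym2 V),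
    (∃ e ∈ G.edgeSet, e ∉ s.1 ∧ e ∉ s.2) →
    σ s ∈ G.edgeSet ∧ σ s ∉ s.1 ∧ σ s ∉ s.2

def playMB [DecidableEq V]
    (σ τ : Finset (Sym2 V) × Finset (Sym2 V) → Sym2 V) :
    ℕ → Finset (Sym2 V) × Finset (Sym2 V)
  | 0 => (∅, ∅)
  | n + 1 =>
      let p := playMB σ τ n
      let q : Finset (Sym2 V) × Finset (Sym2 V) := (p.1, insert (τ p) p.2)
      (insert (σ q) q.1, q.2)


/-!
Suppose deleting a set `s` of fewer than `d - Δ(H)` edges disconnects `G - H`, and let `U` be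
a component, replaced by its complement if necessary so that `|U| ≤ n/2`. Testing the eigenvalue
bound on `|Uᶜ| 1_U - |U| 1_{Uᶜ}` gives the expander mixing bound
`n e_G(U, Uᶜ) ≥ (d - λ)|U|(n - |U|)`, and `H` removes at most `Δ(H)|U|` of these edges. If
`|U| = 1` the cut is a whole neighbourhood, of size `d`. If `2 ≤ |U| ≤ n/2`, the bounds on `λ` and
`Δ(H)` give `e_G(U, Uᶜ) ≥ d + Δ(H)(|U| - 1)`, with slack at least
`(d - λ)(n - 2|U|)(|U| - 2)/(2n)`.
Either way `|s| ≥ e_{G-H}(U, Uᶜ) ≥ d - Δ(H)`.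
-/

open Finset

section

variable [Fintype V]

lemma degN_eq_degree (G : SimpleGraph V) [DecidableRel G.Adj] (v : V) :
    degN G v = G.degree v := by
  rw [degN, ← card_neighborSet_eq_degree, Set.ncard_eq_toFinset_card', Set.toFinset_card]

lemma degN_le_maxDeg (G : SimpleGraph V) (v : V) : degN G v ≤ maxDeg G :=
  le_csSup (Set.finite_range _).bddAbove ⟨v, rfl⟩

end

namespace SimpleGraph

lemma card_interedges_comm (G : SimpleGraph V) [DecidableRel G.Adj] (s t : Finset V) :
    #(G.interedges s t) = #(G.interedges t s) :=
  @Rel.card_interedges_comm _ G.Adj _ ⟨fun _ _ h => h.symm⟩ s t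

lemma card_interedges_le_card_sdiff_add (G H : SimpleGraph V) [DecidableRel G.Adj]
    [DecidableRel H.Adj] (s t : Finset V) :
    #(G.interedges s t) ≤ #((G \ H).interedges s t) + #(H.interedges s t) := by
  refine (card_le_card fun e he => ?_).trans (card_union_le _ _)
  rw [G.mem_interedges_iff] at he
  by_cases hH : H.Adj e.1 e.2
  · exact mem_union_right _ (H.mem_interedges_iff.mpr ⟨he.1, he.2.1, hH⟩)
  · exact mem_union_left _ ((G \ H).mem_interedges_iff.mpr ⟨he.1, he.2.1, he.2.2, hH⟩)

variable [Fintype V]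

lemma card_interedges_singleton_compl (G : SimpleGraph V) [DecidableRel G.Adj] (v : V) :
    #(G.interedges {v} {v}ᶜ) = G.degree v := by
  rw [SimpleGraph.interedges, Rel.interedges_eq_biUnion, singleton_biUnion, card_map,
    ← card_neighborFinset_eq_degree, neighborFinset_eq_filter]
  congr 1
  ext w
  simpa using fun h => (G.ne_of_adj h).symm

lemma card_interedges_compl_le_of_closed (G : SimpleGraph V) [DecidableRel G.Adj]
    (s : Finset (Sym2 V)) (U : Finset V)
    (hU : ∀ u v, u ∈ U → (G.deleteEdges ↑s).Adj u v → v ∈ U) :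
    #(G.interedges U Uᶜ) ≤ #s := by
  refine card_le_card_of_injOn (fun e => s(e.1, e.2)) (fun e he => ?_) ?_
  · rw [mem_coe, G.mem_interedges_iff, mem_compl] at he
    by_contra hs
    exact he.2.1 (hU _ _ he.1 (deleteEdges_adj.mpr ⟨he.2.2, hs⟩))
  · rintro ⟨a, b⟩ hab ⟨c, d⟩ hcd h
    rw [mem_coe, G.mk_mem_interedges_iff, mem_compl] at hab hcd
    rcases Sym2.eq_iff.mp h with ⟨rfl, rfl⟩ | ⟨rfl, rfl⟩
    · rfl
    · exact absurd hab.1 hcd.2.1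

lemma edgeConnK_of_le_card_interedges [Nonempty V] (G : SimpleGraph V) [DecidableRel G.Adj]
    {k : ℕ} (h : ∀ U : Finset V, U.Nonempty → U ≠ univ → k ≤ #(G.interedges U Uᶜ)) :
    EdgeConnK G k := by
  intro s hs
  refine (connected_iff _).mpr ⟨fun u v => ?_, inferInstance⟩
  by_contra huv
  let U : Finset V := {w | (G.deleteEdges ↑s).Reachable u w}
  have hcut := h U ⟨u, by simp [U]⟩ fun hU => huv <| by
    simpa [U] using (hU ▸ mem_univ v : v ∈ U)
  have hclosed := card_interedges_compl_le_of_closed G s U fun x y hx hxy => by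
    simp only [U, mem_filter_univ] at hx ⊢
    exact hx.trans hxy.reachable
  omega

lemma card_interedges_le_card_mul_maxDeg (H : SimpleGraph V) [DecidableRel H.Adj]
    (s t : Finset V) : #(H.interedges s t) ≤ #s * maxDeg H := by
  rw [SimpleGraph.interedges, Rel.interedges_eq_biUnion]
  refine card_biUnion_le.trans (sum_le_card_nsmul _ _ _ fun v _ => ?_)
  refine le_trans ?_ (degN_le_maxDeg H v)
  rw [card_map, degN_eq_degree, ← card_neighborFinset_eq_degree, neighborFinset_eq_filter]
  exact card_le_card (filter_subset_filter _ (subset_univ t))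

lemma sum_adj_sq_sub_ite_mem (G : SimpleGraph V) [DecidableRel G.Adj] (U : Finset V)
    (p q : ℝ) :
    (∑ i, ∑ j, if G.Adj i j then
        ((if i ∈ U then p else q) - (if j ∈ U then p else q)) ^ 2 else 0) =
      2 * (p - q) ^ 2 * #(G.interedges U Uᶜ) := by
  have hterm : ∀ i j, (if G.Adj i j then
        ((if i ∈ U then p else q) - (if j ∈ U then p else q)) ^ 2 else 0) =
      (p - q) ^ 2 * ((if (i, j) ∈ G.interedges U Uᶜ then 1 else 0) +
        (if (i, j) ∈ G.interedges Uᶜ U then 1 else 0)) := by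
    intro i j
    by_cases hij : G.Adj i j <;> by_cases hi : i ∈ U <;> by_cases hj : j ∈ U <;>
      simp [SimpleGraph.mk_mem_interedges_iff, hij, hi, hj, sub_sq_comm q p]
  simp_rw [hterm, ← mul_sum]
  rw [← Fintype.sum_prod_type' (f := fun i j => (if (i, j) ∈ G.interedges U Uᶜ then (1 : ℝ)
    else 0) + (if (i, j) ∈ G.interedges Uᶜ U then 1 else 0))]
  simp only [Prod.mk.eta, sum_add_distrib, sum_boole, filter_univ_mem,
    card_interedges_comm G Uᶜ U]
  ring

end SimpleGraph

section

variable [Fintype V]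

lemma quadForm_eq_of_isReg {G : SimpleGraph V} {d : ℕ} (hG : IsReg G d) (x : V → ℝ) :
    quadForm G x =
      d * ∑ v, x v ^ 2 - (∑ i, ∑ j, if G.Adj i j then (x i - x j) ^ 2 else 0) / 2 := by
  rw [← lapMatrix_toLinearMap₂', Matrix.toLinearMap₂'_apply', lapMatrix, Matrix.sub_mulVec,
    dotProduct_sub, dotProduct_mulVec_degMatrix, quadForm, ← dotProduct_mulVec_adjMatrix,
    mul_sum]
  simp only [← degN_eq_degree, hG _, sq, mul_assoc]
  ring

lemma IsNDL.mul_card_mul_card_compl_le {G : SimpleGraph V} {d : ℕ} {lam : ℝ}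
    (hG : IsNDL G d lam) (U : Finset V) :
    (d - lam) * (#U : ℝ) * (#Uᶜ : ℝ) ≤ Fintype.card V * (#(G.interedges U Uᶜ) : ℝ) := by
  set a : ℝ := ((#U : ℕ) : ℝ)
  set b : ℝ := ((#Uᶜ : ℕ) : ℝ)
  set n : ℝ := (Fintype.card V : ℝ)
  have hab : a + b = n := by simp only [a, b, n]; exact_mod_cast card_add_card_compl U
  set x : V → ℝ := fun v => if v ∈ U then b else -a
  have hsum : ∑ v, x v = 0 := by
    simp only [x, sum_ite, filter_mem_eq_of_subset (subset_univ U), sum_const, nsmul_eq_mul,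
      filter_not, ← compl_eq_univ_sdiff]
    ring
  have hsq : ∑ v, x v ^ 2 = a * b * n := by
    simp only [x, ite_pow, even_two, Even.neg_pow, sum_ite, filter_mem_eq_of_subset (subset_univ U),
      sum_const, nsmul_eq_mul, filter_not, ← compl_eq_univ_sdiff, ← hab]
    ring
  have hquad : quadForm G x = d * (a * b * n) - n ^ 2 * (#(G.interedges U Uᶜ) : ℝ) := by
    rw [quadForm_eq_of_isReg hG.1, sum_adj_sq_sub_ite_mem, hsq, sub_neg_eq_add, add_comm b, hab]
    ring
  have hbound := (abs_le.mp (hG.2 x hsum)).2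
  rw [hquad, hsq] at hbound
  rcases (Nat.cast_nonneg _ : (0 : ℝ) ≤ n).eq_or_lt with hn | hn
  · have ha : a = 0 := by
      linarith [(Nat.cast_nonneg _ : (0 : ℝ) ≤ a), (Nat.cast_nonneg _ : (0 : ℝ) ≤ b)]
    rw [ha, mul_zero, zero_mul]
    positivity
  · exact le_of_mul_le_mul_left (by linarith) hn

lemma add_mul_sub_one_le_of_mul_mul_sub_le {n a d lam Δ c : ℝ} (hd : 0 ≤ d) (ha : 2 ≤ a)
    (han : 2 * a ≤ n) (hlam : lam ≤ d * (n - 4) / (3 * n - 4))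
    (hΔ : Δ ≤ (d - lam) / 2 * (1 - 4 / n)) (hc : (d - lam) * a * (n - a) ≤ n * c) :
    d + Δ * (a - 1) ≤ c := by
  have hn : 0 < n := by linarith
  have hgap : 2 * n * d ≤ (d - lam) * (3 * n - 4) := by
    linarith [(le_div_iff₀ (by linarith : (0 : ℝ) < 3 * n - 4)).mp hlam]
  have hgap_nonneg : 0 ≤ d - lam :=
    nonneg_of_mul_nonneg_left (by nlinarith) (by linarith : (0 : ℝ) < 3 * n - 4)
  have hΔ' : 2 * n * Δ ≤ (d - lam) * (n - 4) := by
    calc 2 * n * Δ ≤ 2 * n * ((d - lam) / 2 * (1 - 4 / n)) := by gcongr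
      _ = (d - lam) * (n - 4) := by field_simp
  have hsq : 0 ≤ (d - lam) * ((n - 2 * a) * (a - 2)) :=
    mul_nonneg hgap_nonneg (mul_nonneg (by linarith) (by linarith))
  have hΔa := mul_le_mul_of_nonneg_right hΔ' (by linarith : (0 : ℝ) ≤ a - 1)
  refine le_of_mul_le_mul_left ?_ (by linarith : (0 : ℝ) < 2 * n)
  linarith

lemma IsNDL.add_mul_le_card_interedges {G : SimpleGraph V} {d : ℕ} {lam Δ : ℝ}
    (hG : IsNDL G d lam)
    (hlam : lam ≤ (d : ℝ) * ((Fintype.card V : ℝ) - 4) / (3 * (Fintype.card V : ℝ) - 4))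
    (hΔ : Δ ≤ ((d : ℝ) - lam) / 2 * (1 - 4 / (Fintype.card V : ℝ)))
    {U : Finset V} (hU : U.Nonempty) (hUn : 2 * #U ≤ Fintype.card V) :
    d + Δ * ((#U : ℝ) - 1) ≤ #(G.interedges U Uᶜ) := by
  rcases (one_le_card.mpr hU).eq_or_lt with h1 | h2
  · obtain ⟨v, rfl⟩ := card_eq_one.mp h1.symm
    simp [card_interedges_singleton_compl, ← degN_eq_degree, hG.1 v]
  · refine add_mul_sub_one_le_of_mul_mul_sub_le (Nat.cast_nonneg d) (by exact_mod_cast h2)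
      (by exact_mod_cast hUn) hlam hΔ ?_
    simpa [card_compl, Nat.cast_sub (card_le_univ U)] using hG.mul_card_mul_card_compl_le U

lemma IsNDL.le_card_interedges_sdiff_add_maxDeg {G H : SimpleGraph V} {d : ℕ} {lam : ℝ}
    (hG : IsNDL G d lam)
    (hlam : lam ≤ (d : ℝ) * ((Fintype.card V : ℝ) - 4) / (3 * (Fintype.card V : ℝ) - 4))
    (hΔ : (maxDeg H : ℝ) ≤ ((d : ℝ) - lam) / 2 * (1 - 4 / (Fintype.card V : ℝ)))
    {U : Finset V} (hU : U.Nonempty) (hUuniv : U ≠ univ) :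
    d ≤ #((G \ H).interedges U Uᶜ) + maxDeg H := by
  wlog hUn : 2 * #U ≤ Fintype.card V generalizing U
  · have hUc : 2 * #Uᶜ ≤ Fintype.card V := by rw [card_compl]; omega
    have := this (nonempty_iff_ne_empty.mpr ((compl_eq_empty_iff U).not.mpr hUuniv))
      ((compl_ne_univ_iff_nonempty U).mpr hU) hUc
    rwa [compl_compl, card_interedges_comm] at this
  have hcut : (d : ℝ) + maxDeg H * ((#U : ℝ) - 1) ≤ #(G.interedges U Uᶜ) :=
    hG.add_mul_le_card_interedges hlam hΔ hU hUn
  have hsplit : (#(G.interedges U Uᶜ) : ℝ) ≤ #((G \ H).interedges U Uᶜ) + #U * maxDeg H := by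
    exact_mod_cast (card_interedges_le_card_sdiff_add G H U Uᶜ).trans
      (Nat.add_le_add_left (card_interedges_le_card_mul_maxDeg H U Uᶜ) _)
  have : (d : ℝ) ≤ #((G \ H).interedges U Uᶜ) + maxDeg H := by linarith
  exact_mod_cast this

end

theorem stmt3_general {V : Type*} [Fintype V] (G : SimpleGraph V) (d : ℕ) (lam : ℝ)
    (hdn : d ≤ Fintype.card V - 1) (hndl : IsNDL G d lam)
    (hlam : lam ≤ (d : ℝ) * ((Fintype.card V : ℝ) - 4) / (3 * (Fintype.card V : ℝ) - 4)) :
    ∀ H ≤ G, (maxDeg H : ℝ) ≤ ((d : ℝ) - lam) / 2 * (1 - 4 / (Fintype.card V : ℝ)) →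
      EdgeConnK (G \ H) (d - maxDeg H) := by
  intro H _ hΔ
  rcases isEmpty_or_nonempty V with hV | hV
  · have hd : d = 0 := by simpa using hdn
    intro s hs
    simp [hd] at hs
  exact edgeConnK_of_le_card_interedges (G \ H) fun U hU hUuniv =>
    Nat.sub_le_iff_le_add.mpr (hndl.le_card_interedges_sdiff_add_maxDeg hlam hΔ hU hUuniv)

/-- for an (n,d,λ)-graph with 3 ≤ d ≤ n-1 and
λ ≤ d(n-4)/(3n-4), removing any H with Δ(H) ≤ (d-λ)/2·(1-4/n) leaves a
(d - Δ(H))-edge-connected graph. -/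
theorem stmt3 {V : Type*} [Fintype V] (G : SimpleGraph V) (d : ℕ) (lam : ℝ)
    (hd3 : 3 ≤ d) (hdn : d ≤ Fintype.card V - 1) (hndl : IsNDL G d lam)
    (hlam : lam ≤ (d : ℝ) * ((Fintype.card V : ℝ) - 4) / (3 * (Fintype.card V : ℝ) - 4)) :
    ∀ H ≤ G, (maxDeg H : ℝ) ≤ ((d : ℝ) - lam) / 2 * (1 - 4 / (Fintype.card V : ℝ)) →
      EdgeConnK (G \ H) (d - maxDeg H) :=
  stmt3_general G d lam hdn hndl hlam
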